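/- arXiv:2105.05172 — 3 statements merged into one kernel-verified Lean document; each statement's English description precedes it below -/
import Mathlib

section
/- Let X_1,...,X_n be i.i.d. random variables over a finite alphabet and let w be a nonoverlapping word of length m with P(w) the probability that a fixed window of length m equals w. Let N_w be the number of occurrences of w in X_1...X_n. Then for every s >= 0, P(N_w = s) = sum over k with s <= k and n - m*k >= 0 of (-1)^{k-s} * C(n - m*k + k, k) * C(k, s) * P(w)^k. -/
open MeasureTheory
open scoped Classical

/-- `w` occurs in `z` at position `i` (0-indexed) as a contiguous substring. -/
def OccursAt {α : Type*} (z w : List α) (i : ℕ) : Prop :=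
  i + w.length ≤ z.length ∧ (z.drop i).take w.length = w

/-- A word `w` is nonoverlapping if no string of length `< 2|w|` contains two
occurrences of `w` at distinct positions. -/
def Nonoverlapping {α : Type*} (w : List α) : Prop :=
  ¬ ∃ (z : List α) (i j : ℕ), z.length < 2 * w.length ∧ i ≠ j ∧
    OccursAt z w i ∧ OccursAt z w j

/-- The number of occurrences of the word `w` in the string `z`. -/
noncomputable def countOcc {α : Type*} (w z : List α) : ℕ :=
  ((Finset.range z.length).filter (fun i => OccursAt z w i)).card

/-- The probability of the word `w` at a fixed position under the i.i.d. law with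
marginal `μ`. -/
noncomputable def wordProb {α : Type*} [MeasurableSpace α] (μ : Measure α)
    (w : List α) : ℝ :=
  (w.map fun a => (μ {a}).toReal).prod

/-!
Pointwise binomial inversion, `[N = s] = ∑ₖ (-1)^(k-s) C(k,s) C(N,k)`, reduces the claim to the
binomial moments `E[C(N_w, k)]`, i.e. to the sum over `k`-sets `S` of positions of the probability
that `w` occurs at every position of `S`. Since `w` is nonoverlapping, two occurrences are at least
`m` apart, so this probability vanishes unless `S` is `m`-spaced; then the windows are disjoint and
independence of the letters gives `P(w)^k`. Finally, `m`-spaced `k`-sets of windows inside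
`[0, n)` are counted by `C(n - mk + k, k)`.
-/

open Finset

theorem Finset.powersetCard_filter {β : Type*} (k : ℕ) (s : Finset β) (p : β → Prop)
    [DecidablePred p] :
    powersetCard k (s.filter p) = (powersetCard k s).filter fun t => ∀ b ∈ t, p b := by
  ext t
  simp only [mem_powersetCard, mem_filter, subset_iff]
  grind

section Words

variable {α : Type*} {z w : List α} {i j : ℕ}

theorem occursAt_iff_isPrefix : OccursAt z w i ↔ i + w.length ≤ z.length ∧ w <+: z.drop i := by
  rw [List.prefix_iff_eq_take, eq_comm]; rfl

theorem occursAt_iff_getElem? :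
    OccursAt z w i ↔ i + w.length ≤ z.length ∧ ∀ j (hj : j < w.length), z[i + j]? = some w[j] := by
  simp only [occursAt_iff_isPrefix, List.prefix_iff_getElem?, List.getElem?_drop]

theorem Nonoverlapping.add_length_le (hw : Nonoverlapping w) (hij : i < j)
    (hi : OccursAt z w i) (hj : OccursAt z w j) : i + w.length ≤ j := by
  rw [occursAt_iff_isPrefix] at hi hj
  by_contra! hclose
  -- the window `z[i, j + |w|)` is shorter than `2|w|` and contains `w` at `0` and at `j - i`
  refine hw ⟨(z.drop i).take (j - i + w.length), 0, j - i, ?_, by omega, ?_, ?_⟩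
  · simp only [List.length_take, List.length_drop]; omega
  · refine (occursAt_iff_isPrefix).2 ⟨by simp; omega, ?_⟩
    exact List.prefix_take_iff.2 ⟨hi.2, by omega⟩
  · refine (occursAt_iff_isPrefix).2 ⟨by simp; omega, ?_⟩
    rw [List.drop_take, List.drop_drop, Nat.add_sub_cancel' hij.le]
    exact List.prefix_take_iff.2 ⟨hj.2, by omega⟩

end Words

theorem sum_neg_one_pow_mul_choose_mul_choose {R : Type*} [CommRing R] {t N : ℕ} (s : ℕ)
    (ht : t ≤ N) :
    ∑ k ∈ range (N + 1), (-1 : R) ^ (k - s) * k.choose s * t.choose k = if t = s then 1 else 0 := by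
  have hvanish : ∀ k ∈ range (N + 1), k ∉ Ico s (t + 1) →
      (-1 : R) ^ (k - s) * k.choose s * t.choose k = 0 := by
    intro k _ hk
    rcases lt_or_ge k s with hks | hsk
    · simp [Nat.choose_eq_zero_of_lt hks]
    · simp [Nat.choose_eq_zero_of_lt (show t < k by simp at hk; omega)]
  rw [← sum_subset (fun k hk => by simp at hk ⊢; omega) hvanish]
  rcases lt_or_ge t s with hts | hst
  · rw [Ico_eq_empty (by omega), sum_empty, if_neg hts.ne]
  have halt := congrArg (Int.cast (R := R)) (Int.alternating_sum_range_choose (n := t - s))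
  push_cast at halt
  rw [sum_Ico_eq_sum_range, Nat.succ_sub hst]
  calc ∑ j ∈ range (t - s + 1), (-1 : R) ^ (s + j - s) * (s + j).choose s * t.choose (s + j)
      = t.choose s * ∑ j ∈ range (t - s + 1), (-1 : R) ^ j * (t - s).choose j := by
        rw [mul_sum]
        refine sum_congr rfl fun j _ => ?_
        have := Nat.choose_mul (n := t) (k := s + j) (s := s) (by omega)
        rw [Nat.add_sub_cancel_left] at this ⊢
        rw [mul_assoc, mul_comm ((s + j).choose s : R), ← Nat.cast_mul, this]
        push_cast; ring
    _ = if t = s then 1 else 0 := by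
        rw [halt]
        by_cases h : t = s
        · simp [h]
        · simp [h, show t - s ≠ 0 by omega]

section SpacedSets

variable {m n k : ℕ} {S : Finset ℕ}

def IsSpaced (m n : ℕ) (S : Finset ℕ) : Prop :=
  (∀ i ∈ S, i + m ≤ n) ∧ ∀ i ∈ S, ∀ j ∈ S, i < j → i + m ≤ j

noncomputable def spacedSets (m n k : ℕ) : Finset (Finset ℕ) :=
  (powersetCard k (range n)).filter (IsSpaced m n)

theorem mem_spacedSets (hm : 1 ≤ m) : S ∈ spacedSets m n k ↔ #S = k ∧ IsSpaced m n S := by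
  simp only [spacedSets, mem_filter, mem_powersetCard, and_congr_left_iff, and_iff_right_iff_imp]
  intro hS _ i hi
  have := hS.1 i hi
  simp only [mem_range]; omega

theorem isSpaced_insert_iff (hmn : m ≤ n) (hS : n - m ∉ S) :
    IsSpaced m n (insert (n - m) S) ↔ IsSpaced m (n - m) S := by
  simp only [IsSpaced, mem_insert, forall_eq_or_imp]
  constructor
  · rintro ⟨⟨-, hbound⟩, -, hsep⟩
    refine ⟨fun i hi => ?_, fun i hi j hj => (hsep i hi).2 j hj⟩
    have := hbound i hi
    rcases lt_trichotomy i (n - m) with h | h | h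
    · exact (hsep i hi).1 h
    · exact absurd (h ▸ hi) hS
    · omega
  · rintro ⟨hbound, hsep⟩
    refine ⟨⟨by omega, fun i hi => by have := hbound i hi; omega⟩,
      ⟨fun h => absurd h (lt_irrefl _), fun j hj h => by have := hbound j hj; omega⟩,
      fun i hi => ⟨fun _ => hbound i hi, hsep i hi⟩⟩

theorem isSpaced_pred_iff (hm : 1 ≤ m) (hmn : m ≤ n) :
    IsSpaced m (n - 1) S ↔ IsSpaced m n S ∧ n - m ∉ S := by
  constructor
  · rintro ⟨hbound, hsep⟩
    exact ⟨⟨fun i hi => by have := hbound i hi; omega, hsep⟩,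
      fun h => by have := hbound _ h; omega⟩
  · rintro ⟨⟨hbound, hsep⟩, hS⟩
    refine ⟨fun i hi => ?_, hsep⟩
    have := hbound i hi
    have : i ≠ n - m := fun h => hS (h ▸ hi)
    omega

-- Split according to whether the last admissible position `n - m` is used.
theorem card_spacedSets_succ (hm : 1 ≤ m) (hmn : m ≤ n) :
    #(spacedSets m n (k + 1)) = #(spacedSets m (n - 1) (k + 1)) + #(spacedSets m (n - m) k) := by
  rw [← card_filter_add_card_filter_not (p := fun S => n - m ∈ S), add_comm]
  congr 1
  · congr 1
    ext S
    simp only [mem_filter, mem_spacedSets hm, isSpaced_pred_iff hm hmn, and_assoc]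
  · refine card_nbij' (fun S => S.erase (n - m)) (insert (n - m)) ?_ ?_ ?_ ?_
    · intro S hS
      simp only [mem_coe, mem_filter, mem_spacedSets hm] at hS ⊢
      obtain ⟨⟨hcard, hspaced⟩, hmem⟩ := hS
      rw [← insert_erase hmem, isSpaced_insert_iff hmn (notMem_erase _ _)] at hspaced
      exact ⟨by rw [card_erase_of_mem hmem, hcard]; rfl, hspaced⟩
    · intro S hS
      simp only [mem_coe, mem_filter, mem_spacedSets hm] at hS ⊢
      have hnot : n - m ∉ S := fun h => by have := hS.2.1 _ h; omega
      exact ⟨⟨by rw [card_insert_of_notMem hnot, hS.1], (isSpaced_insert_iff hmn hnot).2 hS.2⟩,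
        mem_insert_self _ _⟩
    · intro S hS
      exact insert_erase (mem_filter.1 hS).2
    · intro S hS
      have hS := (mem_spacedSets hm).1 hS
      exact erase_insert fun h => by have := hS.2.1 _ h; omega

theorem spacedSets_zero : spacedSets m n 0 = {∅} := by
  ext S
  simp only [spacedSets, mem_filter, mem_powersetCard, card_eq_zero, mem_singleton]
  constructor
  · exact fun h => h.1.2
  · rintro rfl; simp [IsSpaced]

theorem spacedSets_succ_eq_empty (hnm : n < m) : spacedSets m n (k + 1) = ∅ := by
  refine eq_empty_of_forall_notMem fun S hS => ?_
  simp only [spacedSets, mem_filter, mem_powersetCard] at hS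
  obtain ⟨i, hi⟩ := card_pos.1 (by rw [hS.1.2]; exact k.succ_pos)
  have := hS.2.1 i hi
  omega

theorem card_spacedSets (hm : 1 ≤ m) (n k : ℕ) :
    #(spacedSets m n k) = if m * k ≤ n then (n - m * k + k).choose k else 0 := by
  induction n using Nat.strong_induction_on generalizing k with
  | _ n ih =>
  cases k with
  | zero => simp [spacedSets_zero]
  | succ k =>
    rcases lt_or_ge n m with hnm | hmn
    · rw [spacedSets_succ_eq_empty hnm, if_neg (by nlinarith)]; rfl
    rw [card_spacedSets_succ hm hmn, ih (n - 1) (by omega), ih (n - m) (by omega)]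
    have hmk : m * (k + 1) = m * k + m := by ring
    rcases lt_trichotomy (m * (k + 1)) n with h | h | h
    · obtain ⟨r, hr⟩ : ∃ r, n = m * (k + 1) + r + 1 := ⟨n - m * (k + 1) - 1, by omega⟩
      rw [if_pos (by omega), if_pos (by omega), if_pos h.le,
        show n - 1 - m * (k + 1) + (k + 1) = r + k + 1 by omega,
        show n - m - m * k + k = r + k + 1 by omega,
        show n - m * (k + 1) + (k + 1) = r + k + 1 + 1 by omega,
        Nat.choose_succ_succ' (r + k + 1) k, add_comm]
    · rw [if_neg (by omega), if_pos (by omega), if_pos h.le,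
        show n - m - m * k + k = k by omega,
        show n - m * (k + 1) + (k + 1) = k + 1 by omega, Nat.choose_self, Nat.choose_self]
    · rw [if_neg (by omega), if_neg (by omega), if_neg (by omega)]

end SpacedSets

section Probability

variable {α : Type*} [MeasurableSpace α]

theorem toReal_measure_pi_eq_sum [Fintype α] [MeasurableSingletonClass α] {ι : Type*} [Fintype ι]
    (μ : ι → Measure α) [∀ i, IsFiniteMeasure (μ i)] (A : Set (ι → α)) :
    (Measure.pi μ A).toReal = ∑ x ∈ univ.filter (· ∈ A), ∏ i, (μ i {x i}).toReal := by
  have hA : A = ↑(univ.filter (· ∈ A)) := by ext; simp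
  rw [hA, ← sum_measure_singleton, ENNReal.toReal_sum (fun _ _ => measure_ne_top _ _)]
  simp [ENNReal.toReal_prod]

variable (μ : Measure α) [IsProbabilityMeasure μ] {n : ℕ} {w : List α} {S : Finset ℕ}

theorem toReal_measure_pi_forall_occursAt_of_isSpaced (hS : IsSpaced w.length n S) :
    (Measure.pi (fun _ : Fin n => μ) {x | ∀ i ∈ S, OccursAt (List.ofFn x) w i}).toReal
      = wordProb μ w ^ #S := by
  obtain ⟨hbound, hsep⟩ := hS
  set A : ℕ → Set α := fun c => {a | ∀ i ∈ S, ∀ j (hj : j < w.length), i + j = c → a = w[j]}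
  set T := S.biUnion fun i => Ico i (i + w.length)
  have hevent : {x : Fin n → α | ∀ i ∈ S, OccursAt (List.ofFn x) w i}
      = Set.univ.pi fun c : Fin n => A c := by
    ext x
    simp only [Set.mem_ofPred_eq, Set.mem_univ_pi, occursAt_iff_getElem?, List.length_ofFn,
      List.getElem?_ofFn, A]
    constructor
    · rintro h ⟨c, hc⟩ i hi j hj rfl
      simpa [hc, eq_comm] using (h i hi).2 j hj
    · intro h i hi
      refine ⟨hbound i hi, fun j hj => ?_⟩
      have hc : i + j < n := by have := hbound i hi; omega
      simp [hc, h ⟨i + j, hc⟩ i hi j hj rfl]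
  have hwindow : ∀ i ∈ S, ∀ j (hj : j < w.length), A (i + j) = {w[j]} := by
    intro i hi j hj
    ext a
    refine ⟨fun h => h i hi j hj rfl, ?_⟩
    rintro rfl i' hi' j' hj' hij
    obtain rfl : i' = i := by
      by_contra hne
      rcases lt_or_gt_of_ne hne with h | h
      · have := hsep i' hi' i hi h; omega
      · have := hsep i hi i' hi' h; omega
    obtain rfl : j' = j := by omega
    rfl
  have hfree : ∀ c ∈ range n, c ∉ T → (μ (A c)).toReal = 1 := by
    intro c _ hc
    have : A c = Set.univ := by
      refine Set.eq_univ_of_forall fun a i hi j hj hij => absurd ?_ hc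
      exact mem_biUnion.2 ⟨i, hi, mem_Ico.2 ⟨by omega, by omega⟩⟩
    simp [this]
  have hdisj : (S : Set ℕ).PairwiseDisjoint fun i => Ico i (i + w.length) := by
    intro i hi i' hi' hne
    refine disjoint_left.2 fun c hc hc' => ?_
    simp only [mem_Ico] at hc hc'
    rcases lt_or_gt_of_ne hne with h | h
    · have := hsep i hi i' hi' h; omega
    · have := hsep i' hi' i hi h; omega
  have hT : T ⊆ range n := by
    intro c hc
    obtain ⟨i, hi, hc⟩ := mem_biUnion.1 hc
    have := hbound i hi
    simp only [mem_Ico, mem_range] at hc ⊢; omega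
  rw [hevent, Measure.pi_pi, ENNReal.toReal_prod,
    Fin.prod_univ_eq_prod_range (fun c => (μ (A c)).toReal), ← prod_subset hT hfree,
    prod_biUnion hdisj, ← prod_const]
  refine prod_congr rfl fun i hi => ?_
  rw [prod_Ico_eq_prod_range, Nat.add_sub_cancel_left, ← Fin.prod_univ_eq_prod_range,
    wordProb, ← Fin.prod_univ_fun_getElem]
  refine prod_congr rfl fun j _ => ?_
  rw [hwindow i hi j j.2]

theorem toReal_measure_pi_forall_occursAt (hw : Nonoverlapping w) (S : Finset ℕ) :
    (Measure.pi (fun _ : Fin n => μ) {x | ∀ i ∈ S, OccursAt (List.ofFn x) w i}).toReal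
      = if IsSpaced w.length n S then wordProb μ w ^ #S else 0 := by
  split_ifs with hS
  · exact toReal_measure_pi_forall_occursAt_of_isSpaced μ hS
  · suffices {x : Fin n → α | ∀ i ∈ S, OccursAt (List.ofFn x) w i} = ∅ by simp [this]
    refine Set.eq_empty_of_forall_notMem fun x hx => hS ⟨fun i hi => ?_, fun i hi j hj hij =>
      hw.add_length_le hij (hx i hi) (hx j hj)⟩
    simpa using (hx i hi).1

end Probability

-- The binomial moment `E[C(N_w, k)]`.
theorem sum_choose_countOcc_mul_prod {α : Type*} [Fintype α] [MeasurableSpace α]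
    [MeasurableSingletonClass α] (μ : Measure α) [IsProbabilityMeasure μ] {n : ℕ} {w : List α}
    (hw : Nonoverlapping w) (k : ℕ) :
    ∑ x : Fin n → α, ((countOcc w (List.ofFn x)).choose k : ℝ) * ∏ i, (μ {x i}).toReal
      = #(spacedSets w.length n k) * wordProb μ w ^ k := by
  have hchoose : ∀ x : Fin n → α, (countOcc w (List.ofFn x)).choose k
      = #((powersetCard k (range n)).filter fun S => ∀ i ∈ S, OccursAt (List.ofFn x) w i) := by
    intro x
    rw [countOcc, ← card_powersetCard, List.length_ofFn, powersetCard_filter]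
  calc ∑ x : Fin n → α, ((countOcc w (List.ofFn x)).choose k : ℝ) * ∏ i, (μ {x i}).toReal
      = ∑ S ∈ powersetCard k (range n),
          (Measure.pi (fun _ : Fin n => μ) {x | ∀ i ∈ S, OccursAt (List.ofFn x) w i}).toReal := by
        simp only [hchoose, toReal_measure_pi_eq_sum, card_filter, Nat.cast_sum, sum_mul,
          sum_filter]
        rw [sum_comm]
        simp only [Set.mem_ofPred_eq, Nat.cast_ite, Nat.cast_one, Nat.cast_zero, ite_mul, one_mul,
          zero_mul]
        congr!
    _ = ∑ S ∈ spacedSets w.length n k, wordProb μ w ^ k := by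
        rw [spacedSets, sum_filter]
        refine sum_congr rfl fun S hS => ?_
        rw [toReal_measure_pi_forall_occursAt μ hw, (mem_powersetCard.1 hS).2]
    _ = #(spacedSets w.length n k) * wordProb μ w ^ k := by
        rw [sum_const, nsmul_eq_mul]

/-- Exact distribution of the number of occurrences of a nonoverlapping word `w`
of length `m` in an i.i.d. string of length `n`:
`P(N_w = s) = ∑_{k ≥ s, n - m k ≥ 0} (-1)^(k-s) C(n - m k + k, k) C(k, s) P(w)^k`. -/
theorem stmt3 {α : Type*} [Fintype α] [MeasurableSpace α] [MeasurableSingletonClass α]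
    (μ : Measure α) [IsProbabilityMeasure μ] (n m : ℕ) (w : List α)
    (hw : Nonoverlapping w) (hm : w.length = m) (hm1 : 1 ≤ m) (s : ℕ) :
    ((Measure.pi fun _ : Fin n => μ) {x | countOcc w (List.ofFn x) = s}).toReal
      = ∑ k ∈ Finset.range (n + 1),
          (if s ≤ k ∧ m * k ≤ n then
            (-1 : ℝ) ^ (k - s) * ((n - m * k + k).choose k : ℝ) * (k.choose s : ℝ)
              * (wordProb μ w) ^ k
          else 0) := by
  subst hm
  set N : (Fin n → α) → ℕ := fun x => countOcc w (List.ofFn x)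
  set p : (Fin n → α) → ℝ := fun x => ∏ i, (μ {x i}).toReal
  have hN : ∀ x, N x ≤ n := fun x => (card_filter_le _ _).trans (by simp)
  calc ((Measure.pi fun _ : Fin n => μ) {x | N x = s}).toReal
      = ∑ x, (if N x = s then 1 else 0) * p x := by
        simp only [toReal_measure_pi_eq_sum, sum_filter, ite_mul, one_mul, zero_mul, p]
        congr!
    _ = ∑ x, ∑ k ∈ range (n + 1), (-1 : ℝ) ^ (k - s) * k.choose s * ((N x).choose k * p x) := by
        refine sum_congr rfl fun x _ => ?_
        rw [← sum_neg_one_pow_mul_choose_mul_choose s (hN x), sum_mul]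
        exact sum_congr rfl fun k _ => by ring
    _ = ∑ k ∈ range (n + 1),
          (-1 : ℝ) ^ (k - s) * k.choose s * (#(spacedSets w.length n k) * wordProb μ w ^ k) := by
        rw [sum_comm]
        simp only [← mul_sum, N, p, sum_choose_countOcc_mul_prod μ hw]
    _ = _ := by
        refine sum_congr rfl fun k _ => ?_
        rw [card_spacedSets hm1]
        by_cases hsk : s ≤ k
        · simp only [hsk, true_and]
          split_ifs <;> push_cast <;> ring
        · simp [Nat.choose_eq_zero_of_lt (not_le.1 hsk), hsk]
end

section
/- With A(k) = C(n - m*k + k, k) * P(w)^k and B(t) = P(N_w = t) for a nonoverlapping word w of length m in an i.i.d. string of length n, the identity A(k) = sum_{t >= k} B(t) * C(t, k) holds for all k with n - m*k >= 0. -/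
open MeasureTheory
open scoped Classical

/-! Expanding `C(N_w, k)` as the number of `k`-sets of occurrence positions turns the right-hand
side into `∑_S P(w occurs at every j ∈ S)` over the `k`-subsets `S` of `{0, …, n - 1}`. Since `w` is
nonoverlapping, this probability vanishes unless the positions in `S` are at least `m` apart and
`S` fits in the string; then the `k` occurrences constrain disjoint letters, so by independence
the probability is `P(w)^k`. Finally, `t_0 < ⋯ < t_{k-1} ↦ t_j + (m - 1) j` is a bijection from
the `k`-subsets of `{0, …, n - (m - 1) k - 1}` onto these spaced sets, so there are
`C(n - mk + k, k)` of them. -/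

open Finset

section Rank

variable {α β : Type*} [LinearOrder α] [LinearOrder β]

def rankIn (T : Finset α) (t : α) : ℕ := #{x ∈ T | x < t}

lemma rankIn_image {f : α → β} {T : Finset α} (hf : StrictMonoOn f T) {t : α} (ht : t ∈ T) :
    rankIn (T.image f) (f t) = rankIn T t := by
  have himage : {y ∈ T.image f | y < f t} = {x ∈ T | x < t}.image f := by
    ext y
    simp only [mem_filter, mem_image]
    constructor
    · rintro ⟨⟨x, hx, rfl⟩, hlt⟩
      exact ⟨x, ⟨hx, (hf.lt_iff_lt hx ht).mp hlt⟩, rfl⟩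
    · rintro ⟨x, ⟨hx, hlt⟩, rfl⟩
      exact ⟨⟨x, hx, rfl⟩, hf hx ht hlt⟩
  rw [rankIn, himage, card_image_of_injOn (hf.injOn.mono (coe_subset.2 (filter_subset _ _)))]
  rfl

lemma rankIn_lt_rankIn {T : Finset α} {t t' : α} (ht : t ∈ T) (h : t < t') :
    rankIn T t < rankIn T t' :=
  card_lt_card <| (ssubset_iff_of_subset (monotone_filter_right T fun _ _ hx => hx.trans h)).2
    ⟨t, mem_filter.2 ⟨ht, h⟩, fun hmem => lt_irrefl t (mem_filter.1 hmem).2⟩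

lemma rankIn_lt_card {T : Finset α} {t : α} (ht : t ∈ T) : rankIn T t < #T :=
  card_lt_card <| filter_ssubset.2 ⟨t, ht, lt_irrefl t⟩

end Rank

def SpacedBy (m : ℕ) (S : Finset ℕ) : Prop :=
  ∀ i ∈ S, ∀ j ∈ S, i < j → i + m ≤ j

namespace SpacedBy

variable {m : ℕ} {S : Finset ℕ}

lemma mono {A : Finset ℕ} (hS : SpacedBy m S) (hA : A ⊆ S) : SpacedBy m A :=
  fun i hi j hj => hS i (hA hi) j (hA hj)

lemma mul_card_le_sub (hS : SpacedBy m S) {a b : ℕ} (h : ∀ x ∈ S, a ≤ x ∧ x + m ≤ b) :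
    m * #S ≤ b - a := by
  -- the blocks `[x, x + m)` for `x ∈ S` are disjoint and lie in `[a, b)`
  have hdisj : (S : Set ℕ).PairwiseDisjoint fun x => Ico x (x + m) := by
    intro x hx y hy hxy
    rw [Function.onFun, disjoint_left]
    intro z hzx hzy
    rw [mem_Ico] at hzx hzy
    rcases lt_or_gt_of_ne hxy with hlt | hlt
    · have := hS x hx y hy hlt; omega
    · have := hS y hy x hx hlt; omega
  have hsub : S.biUnion (fun x => Ico x (x + m)) ⊆ Ico a b :=
    biUnion_subset.2 fun x hx => Ico_subset_Ico (h x hx).1 (h x hx).2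
  have := card_le_card hsub
  rw [card_biUnion hdisj] at this
  simp only [Nat.card_Ico, Nat.add_sub_cancel_left, sum_const, smul_eq_mul] at this
  rwa [mul_comm]

lemma add_mul_rankIn_le (hS : SpacedBy m S) {s s' : ℕ} (hs' : ∀ x ∈ S, x < s' → x + m ≤ s')
    (h : s ≤ s') : s + m * rankIn S s' ≤ s' + m * rankIn S s := by
  set A := {x ∈ S | s ≤ x ∧ x < s'} with hA
  have hsplit : rankIn S s' = rankIn S s + #A := by
    rw [rankIn, ← card_filter_add_card_filter_not (p := (· < s)), filter_filter, filter_filter,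
      rankIn]
    congr 2
    · exact filter_congr fun x _ => ⟨fun hx => hx.2, fun hx => ⟨hx.trans_le h, hx⟩⟩
    · exact filter_congr fun x _ =>
        ⟨fun hx => ⟨not_lt.1 hx.2, hx.1⟩, fun hx => ⟨hx.2, not_lt.2 hx.1⟩⟩
  have := (hS.mono (filter_subset _ S)).mul_card_le_sub (S := A) (a := s) (b := s') fun x hx => by
    rw [hA, mem_filter] at hx
    exact ⟨hx.2.1, hs' x hx.1 hx.2.2⟩
  rw [hsplit, mul_add]
  omega

lemma mul_rankIn_le (hS : SpacedBy m S) {s : ℕ} (hs : s ∈ S) : m * rankIn S s ≤ s := by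
  simpa [rankIn] using hS.add_mul_rankIn_le (s := 0) (fun x hx => hS x hx s hs) (Nat.zero_le s)

end SpacedBy

section Spread

variable (d : ℕ)

def spread (T : Finset ℕ) : Finset ℕ := T.image fun t => t + d * rankIn T t

def compress (S : Finset ℕ) : Finset ℕ := S.image fun s => s - d * rankIn S s

variable {d}

lemma add_mul_rankIn_add_le {T : Finset ℕ} {t t' : ℕ} (ht : t ∈ T) (h : t < t') :
    t + d * rankIn T t + (d + 1) ≤ t' + d * rankIn T t' := by
  have hrank : d * (rankIn T t + 1) ≤ d * rankIn T t' :=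
    Nat.mul_le_mul_left d (rankIn_lt_rankIn ht h)
  rw [mul_add, mul_one] at hrank
  omega

lemma strictMonoOn_spread (T : Finset ℕ) : StrictMonoOn (fun t => t + d * rankIn T t) T :=
  fun _ ht _ _ h => by have := add_mul_rankIn_add_le (d := d) ht h; dsimp only; omega

lemma strictMonoOn_compress {S : Finset ℕ} (hS : SpacedBy (d + 1) S) :
    StrictMonoOn (fun s => s - d * rankIn S s) S := by
  intro s hs s' hs' h
  have hle := hS.add_mul_rankIn_le (fun x hx => hS x hx s' hs') h.le
  have hlow := hS.mul_rankIn_le hs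
  have hrank := rankIn_lt_rankIn hs h
  simp only [add_mul, one_mul] at hle hlow ⊢
  omega

lemma spacedBy_spread (T : Finset ℕ) : SpacedBy (d + 1) (spread d T) := by
  simp only [SpacedBy, spread, mem_image]
  rintro _ ⟨t, ht, rfl⟩ _ ⟨t', ht', rfl⟩ h
  exact add_mul_rankIn_add_le ht (((strictMonoOn_spread T).lt_iff_lt ht ht').1 h)

lemma compress_spread (T : Finset ℕ) : compress d (spread d T) = T := by
  rw [compress, spread, image_image]
  conv_rhs => rw [← image_id (s := T)]
  refine image_congr fun t ht => ?_
  simp only [Function.comp_apply, id, rankIn_image (strictMonoOn_spread T) ht]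
  omega

lemma spread_compress {S : Finset ℕ} (hS : SpacedBy (d + 1) S) : spread d (compress d S) = S := by
  rw [compress, spread, image_image]
  conv_rhs => rw [← image_id (s := S)]
  refine image_congr fun s hs => ?_
  have hlow := hS.mul_rankIn_le hs
  simp only [Function.comp_apply, id, rankIn_image (strictMonoOn_compress hS) hs]
  rw [add_mul, one_mul] at hlow
  omega

lemma card_spread (T : Finset ℕ) : #(spread d T) = #T :=
  card_image_of_injOn (strictMonoOn_spread T).injOn

lemma card_compress {S : Finset ℕ} (hS : SpacedBy (d + 1) S) : #(compress d S) = #S :=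
  card_image_of_injOn (strictMonoOn_compress hS).injOn

lemma add_succ_le_of_mem_spread {T : Finset ℕ} {N : ℕ} (hT : ∀ t ∈ T, t < N) {i : ℕ}
    (hi : i ∈ spread d T) : i + (d + 1) ≤ N + d * #T := by
  obtain ⟨t, ht, rfl⟩ := mem_image.1 hi
  have hrank : d * (rankIn T t + 1) ≤ d * #T := Nat.mul_le_mul_left d (rankIn_lt_card ht)
  have := hT t ht
  rw [mul_add, mul_one] at hrank
  omega

lemma add_mul_card_lt_of_mem_compress {S : Finset ℕ} (hS : SpacedBy (d + 1) S) {n : ℕ}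
    (hn : ∀ s ∈ S, s + (d + 1) ≤ n) {i : ℕ} (hi : i ∈ compress d S) : i + d * #S < n := by
  obtain ⟨s, hs, rfl⟩ := mem_image.1 hi
  have hrank : rankIn S n = #S := by
    rw [rankIn, filter_true_of_mem fun x hx => by have := hn x hx; omega]
  have htop := hS.add_mul_rankIn_le (s := s) (s' := n) (fun x hx _ => hn x hx)
    (by have := hn s hs; omega)
  have hlow := hS.mul_rankIn_le hs
  have hlt := rankIn_lt_card hs
  rw [hrank] at htop
  simp only [add_mul, one_mul] at htop hlow
  omega

end Spread

theorem card_spacedBy_eq_choose (d n k : ℕ) :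
    #{S ∈ powersetCard k (range n) | (∀ i ∈ S, i + (d + 1) ≤ n) ∧ SpacedBy (d + 1) S}
      = (n - d * k).choose k := by
  rw [← card_range (n - d * k), ← card_powersetCard]
  symm
  refine card_nbij' (spread d) (compress d) ?_ ?_ (fun T _ => compress_spread T)
    (fun S hS => spread_compress (mem_filter.1 hS).2.2)
  · intro T hT
    simp only [coe_filter, mem_coe, mem_powersetCard, subset_iff, mem_range] at hT ⊢
    have hfit : ∀ i ∈ spread d T, i + (d + 1) ≤ n - d * k + d * k := fun i hi =>
      hT.2 ▸ add_succ_le_of_mem_spread (fun t ht => hT.1 ht) hi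
    refine ⟨⟨fun i hi => ?_, by rw [card_spread, hT.2]⟩, fun i hi => ?_, spacedBy_spread T⟩
    all_goals
      obtain ⟨t, ht, -⟩ := mem_image.1 hi
      have := hT.1 ht
      have := hfit i hi
      omega
  · intro S hS
    simp only [coe_filter, mem_coe, mem_powersetCard, subset_iff, mem_range] at hS ⊢
    obtain ⟨⟨-, hcard⟩, hfit, hspaced⟩ := hS
    refine ⟨fun i hi => ?_, by rw [card_compress hspaced, hcard]⟩
    have := add_mul_card_lt_of_mem_compress hspaced hfit hi
    rw [hcard] at this
    omega

lemma occursAt_ofFn_iff {α : Type*} {n : ℕ} (x : Fin n → α) (w : List α) (j : ℕ) :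
    OccursAt (List.ofFn x) w j ↔
      ∃ h : j + w.length ≤ n, ∀ t : Fin w.length, x ⟨j + t, by omega⟩ = w[t] := by
  rw [OccursAt, List.length_ofFn]
  refine ⟨fun ⟨h, hw⟩ => ⟨h, fun t => ?_⟩,
    fun ⟨h, hx⟩ => ⟨h, List.ext_getElem ?_ fun t _ ht => ?_⟩⟩
  · have := List.getElem_of_eq hw (i := t)
      (by simp only [List.length_take, List.length_drop, List.length_ofFn]; omega)
    simpa only [List.getElem_take, List.getElem_drop, List.getElem_ofFn, Fin.getElem_fin] using this
  · simp only [List.length_take, List.length_drop, List.length_ofFn]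
    omega
  · simp only [List.getElem_take, List.getElem_drop, List.getElem_ofFn]
    exact hx ⟨t, ht⟩

lemma Nonoverlapping.spacedBy {α : Type*} {w : List α} (hw : Nonoverlapping w) {z : List α}
    {S : Finset ℕ} (hS : ∀ j ∈ S, OccursAt z w j) : SpacedBy w.length S := by
  intro i hi j hj hij
  by_contra! hclose
  -- both occurrences lie in the window `z[i, j + |w|)`, which is shorter than `2 |w|`
  have hjz := (hS j hj).1
  refine hw ⟨(z.drop i).take (j - i + w.length), 0, j - i, ?_, by omega, ⟨?_, ?_⟩, ⟨?_, ?_⟩⟩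
  all_goals simp only [List.length_take, List.length_drop, List.take_take,
    List.drop_take, List.drop_drop]
  · omega
  · omega
  · rw [min_eq_left (by omega)]
    exact (hS i hi).2
  · omega
  · rw [Nat.add_sub_cancel_left, Nat.add_sub_cancel' hij.le, min_self]
    exact (hS j hj).2

theorem MeasureTheory.Measure.pi_setOf_forall_apply_eq {ι κ α : Type*} [Fintype ι] [Fintype κ]
    [MeasurableSpace α] (μ : ι → Measure α) [∀ i, IsProbabilityMeasure (μ i)]
    {pos : κ → ι} (hpos : pos.Injective) (c : κ → α) :
    Measure.pi μ {x | ∀ p, x (pos p) = c p} = ∏ p, μ (pos p) {c p} := by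
  have hpi : {x : ι → α | ∀ p, x (pos p) = c p}
      = Set.univ.pi fun i => {a | ∀ p, pos p = i → a = c p} := by
    ext x
    simp only [Set.mem_ofPred_eq, Set.mem_pi, Set.mem_univ, true_implies]
    exact ⟨fun hx i p hp => hp ▸ hx p, fun hx p => hx (pos p) p rfl⟩
  rw [hpi, Measure.pi_pi]
  refine (Fintype.prod_of_injective pos hpos _ _ (fun i hi => ?_) fun p => ?_).symm
  · rw [show {a : α | ∀ p, pos p = i → a = c p} = Set.univ from
      Set.eq_univ_of_forall fun a p hp => absurd ⟨p, hp⟩ hi, measure_univ]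
  · congr
    ext a
    exact ⟨fun ha q hq => hpos hq ▸ ha, fun ha => ha p rfl⟩

lemma measureReal_forall_occursAt {α : Type*} [MeasurableSpace α] (μ : Measure α)
    [IsProbabilityMeasure μ] {n : ℕ} {w : List α} {S : Finset ℕ} (hS : SpacedBy w.length S)
    (hfit : ∀ j ∈ S, j + w.length ≤ n) :
    (Measure.pi fun _ : Fin n => μ).real {x | ∀ j ∈ S, OccursAt (List.ofFn x) w j}
      = wordProb μ w ^ #S := by
  let pos : S × Fin w.length → Fin n := fun p => ⟨p.1 + p.2, by have := hfit p.1 p.1.2; omega⟩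
  have hpos : pos.Injective := by
    rintro ⟨⟨j, hj⟩, t⟩ ⟨⟨j', hj'⟩, t'⟩ h
    have h' : j + t = j' + t' := Fin.ext_iff.1 h
    obtain rfl : j = j' := by
      rcases lt_trichotomy j j' with hlt | heq | hlt
      · have := hS j hj j' hj' hlt; omega
      · exact heq
      · have := hS j' hj' j hj hlt; omega
    obtain rfl : t = t' := Fin.ext (by omega)
    rfl
  have hevent : {x : Fin n → α | ∀ j ∈ S, OccursAt (List.ofFn x) w j}
      = {x | ∀ p, x (pos p) = w[p.2]} := by
    ext x
    simp only [Set.mem_ofPred_eq, occursAt_ofFn_iff]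
    exact ⟨fun hx p => (hx p.1 p.1.2).2 p.2, fun hx j hj => ⟨hfit j hj, fun t => hx (⟨j, hj⟩, t)⟩⟩
  rw [measureReal_def, hevent, Measure.pi_setOf_forall_apply_eq _ hpos, ENNReal.toReal_prod,
    Fintype.prod_prod_type, wordProb, ← Fin.prod_univ_fun_getElem, ← Fintype.card_coe S,
    ← card_univ]
  exact prod_eq_pow_card fun _ _ => rfl

lemma measureReal_forall_occursAt_eq_ite {α : Type*} [MeasurableSpace α] (μ : Measure α)
    [IsProbabilityMeasure μ] {n : ℕ} {w : List α} (hw : Nonoverlapping w) (S : Finset ℕ) :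
    (Measure.pi fun _ : Fin n => μ).real {x | ∀ j ∈ S, OccursAt (List.ofFn x) w j}
      = if (∀ j ∈ S, j + w.length ≤ n) ∧ SpacedBy w.length S then wordProb μ w ^ #S else 0 := by
  split_ifs with h
  · exact measureReal_forall_occursAt μ h.2 h.1
  · have hempty : {x : Fin n → α | ∀ j ∈ S, OccursAt (List.ofFn x) w j} = ∅ :=
      Set.eq_empty_of_forall_notMem fun x hx =>
        h ⟨fun j hj => by simpa using (hx j hj).1, hw.spacedBy hx⟩
    rw [hempty, measureReal_empty]

section FiniteSums

variable {Ω : Type*} [Fintype Ω] [MeasurableSpace Ω] [MeasurableSingletonClass Ω]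
  (P : Measure Ω) [IsFiniteMeasure P]

lemma sum_measureReal_preimage_mul {β : Type*} {s : Finset β} {f : Ω → β} (hf : ∀ x, f x ∈ s)
    (g : β → ℝ) : ∑ b ∈ s, P.real (f ⁻¹' {b}) * g b = ∑ x, P.real {x} * g (f x) := by
  have hfiber : ∀ b, P.real (f ⁻¹' {b}) = ∑ x with f x = b, P.real {x} := fun b => by
    rw [sum_measureReal_singleton]
    congr
    ext x
    simp
  simp_rw [hfiber, sum_mul]
  rw [← sum_fiberwise_of_maps_to (fun x _ => hf x)]
  exact sum_congr rfl fun b _ => sum_congr rfl fun x hx => by rw [(mem_filter.1 hx).2]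

lemma sum_measureReal_mul_card_filter {ι : Type*} (𝒮 : Finset ι) (p : ι → Ω → Prop)
    [∀ S, DecidablePred (p S)] :
    ∑ x, P.real {x} * #{S ∈ 𝒮 | p S x} = ∑ S ∈ 𝒮, P.real {x | p S x} := by
  simp_rw [card_filter, Nat.cast_sum, mul_sum, Nat.cast_ite, Nat.cast_one, Nat.cast_zero,
    mul_ite, mul_one, mul_zero]
  rw [sum_comm]
  refine sum_congr rfl fun S _ => ?_
  rw [← sum_filter, sum_measureReal_singleton]
  congr
  ext x
  simp

end FiniteSums

lemma choose_countOcc {α : Type*} {n : ℕ} (w : List α) (x : Fin n → α) (k : ℕ) :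
    (countOcc w (List.ofFn x)).choose k
      = #{S ∈ powersetCard k (range n) | ∀ j ∈ S, OccursAt (List.ofFn x) w j} := by
  rw [countOcc, List.length_ofFn, ← card_powersetCard]
  congr 1
  ext S
  simp only [mem_powersetCard, mem_filter, subset_iff, mem_range]
  exact ⟨fun h => ⟨⟨fun j hj => (h.1 hj).1, h.2⟩, fun j hj => (h.1 hj).2⟩,
    fun h => ⟨fun j hj => ⟨h.1.1 hj, h.2 j hj⟩, h.1.2⟩⟩

lemma countOcc_le_length {α : Type*} (w z : List α) : countOcc w z ≤ z.length :=
  (card_filter_le _ _).trans (card_range _).le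

/-- With `A(k) = C(n - m k + k, k) P(w)^k` and `B(t) = P(N_w = t)` for a
nonoverlapping word `w` of length `m` in an i.i.d. string of length `n`,
`A(k) = ∑_{t ≥ k} B(t) C(t, k)` for all `k` with `n - m k ≥ 0`
(terms with `t < k` vanish since `C(t,k) = 0`, and `N_w ≤ n` always). -/
theorem stmt4 {α : Type*} [Fintype α] [MeasurableSpace α] [MeasurableSingletonClass α]
    (μ : Measure α) [IsProbabilityMeasure μ] (n m : ℕ) (w : List α)
    (hw : Nonoverlapping w) (hm : w.length = m) (hm1 : 1 ≤ m)
    (k : ℕ) (hk : m * k ≤ n) :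
    ((n - m * k + k).choose k : ℝ) * (wordProb μ w) ^ k
      = ∑ t ∈ Finset.range (n + 1),
          ((Measure.pi fun _ : Fin n => μ) {x | countOcc w (List.ofFn x) = t}).toReal
            * (t.choose k : ℝ) := by
  obtain ⟨d, rfl⟩ : ∃ d, m = d + 1 := ⟨m - 1, by omega⟩
  have hchoose : n - (d + 1) * k + k = n - d * k := by rw [add_mul, one_mul] at hk ⊢; omega
  calc ((n - (d + 1) * k + k).choose k : ℝ) * wordProb μ w ^ k
      = #{S ∈ powersetCard k (range n) | (∀ j ∈ S, j + (d + 1) ≤ n) ∧ SpacedBy (d + 1) S}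
          * wordProb μ w ^ k := by rw [card_spacedBy_eq_choose, hchoose]
    _ = ∑ S ∈ powersetCard k (range n),
          (Measure.pi fun _ : Fin n => μ).real {x | ∀ j ∈ S, OccursAt (List.ofFn x) w j} := by
      simp_rw [measureReal_forall_occursAt_eq_ite μ hw, hm]
      rw [sum_ite, sum_const_zero, add_zero, sum_congr rfl fun S hS => by
        rw [(mem_powersetCard.1 (mem_filter.1 hS).1).2], sum_const, nsmul_eq_mul]
    _ = ∑ x, (Measure.pi fun _ : Fin n => μ).real {x}
          * ((countOcc w (List.ofFn x)).choose k : ℝ) := by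
      simp_rw [choose_countOcc]
      exact (sum_measureReal_mul_card_filter _ _ _).symm
    _ = _ := (sum_measureReal_preimage_mul _ (fun x => mem_range.2 <| Nat.lt_succ_of_le <|
      (countOcc_le_length w _).trans_eq (List.length_ofFn)) fun t => (t.choose k : ℝ)).symm
end

section
/- For every m >= 1 and n >= 0, the binary partial word 0^{m+1} (1 ?^m)^n 1 is nonoverlapping, i.e., the set of all its realizations is a nonoverlapping set of words. -/
open scoped Classical

/-- A pair of words `(x, y)` is nonoverlapping if no string `z` with
`|z| < |x| + |y|` contains an occurrence of `x` and a (different, if `x = y`)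
occurrence of `y`. -/
def PairNonoverlapping {α : Type*} (x y : List α) : Prop :=
  ¬ ∃ (z : List α) (i j : ℕ), z.length < x.length + y.length ∧
    OccursAt z x i ∧ OccursAt z y j ∧ (x ≠ y ∨ i ≠ j)

/-- A set of words is nonoverlapping if every pair of its elements (including a
word with itself) is nonoverlapping. -/
def SetNonoverlapping {α : Type*} (S : Set (List α)) : Prop :=
  ∀ x ∈ S, ∀ y ∈ S, PairNonoverlapping x y

/-- `w'` is a realization of the partial word `w` (letters `some a`, wildcard
`none` = `?`): same length and agreement at all non-wildcard positions. -/
def Realizes {α : Type*} (w : List (Option α)) (w' : List α) : Prop :=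
  List.Forall₂ (fun o a => ∀ b, o = some b → a = b) w w'

/-- A partial word is nonoverlapping if the set of its realizations is a
nonoverlapping set of words. -/
def PartialNonoverlapping {α : Type*} (w : List (Option α)) : Prop :=
  SetNonoverlapping {w' | Realizes w w'}

/-!
All realizations have length `L = (n + 1)(m + 1) + 1`, so an overlap of two of them, `x` and `y`,
is a shift `0 < d < L` at which the suffix of `x` from position `d` is a prefix of `y`. But `x` has
a `1` at every position `p (m + 1)` with `1 ≤ p ≤ n + 1`, and the least of these that is `≥ d` lands
inside the prefix `0^(m+1)` of `y`.
-/

section Overlap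

variable {α : Type*}

theorem OccursAt.getElem?_eq {z w : List α} {i t : ℕ} (h : OccursAt z w i) (ht : t < w.length) :
    w[t]? = z[i + t]? := by
  rw [← h.2, List.getElem?_take_of_lt ht, List.getElem?_drop]

theorem OccursAt.getElem?_add_sub_eq {z x y : List α} {i j k : ℕ} (hx : OccursAt z x i)
    (hy : OccursAt z y j) (hij : i ≤ j) (hkx : k + (j - i) < x.length) (hky : k < y.length) :
    x[k + (j - i)]? = y[k]? := by
  rw [hx.getElem?_eq hkx, hy.getElem?_eq hky]
  congr 1
  omega

theorem setNonoverlapping_of_forall_exists_ne {S : Set (List α)} {L : ℕ}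
    (hlen : ∀ x ∈ S, x.length = L)
    (hne : ∀ x ∈ S, ∀ y ∈ S, ∀ d, 0 < d → d < L → ∃ k, k + d < L ∧ x[k + d]? ≠ y[k]?) :
    SetNonoverlapping S := by
  have shifted {x y z : List α} {i j : ℕ} (hx : x ∈ S) (hy : y ∈ S)
      (hz : z.length < x.length + y.length) (hxi : OccursAt z x i) (hyj : OccursAt z y j)
      (hij : i < j) : False := by
    have hxL := hlen x hx
    have hyL := hlen y hy
    have hjz := hyj.1
    obtain ⟨k, hk, hxy⟩ := hne x hx y hy (j - i) (by omega) (by omega)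
    exact hxy (hxi.getElem?_add_sub_eq hyj hij.le (by omega) (by omega))
  rintro x hx y hy ⟨z, i, j, hz, hxi, hyj, hxy⟩
  rcases lt_trichotomy i j with hij | rfl | hji
  · exact shifted hx hy hz hxi hyj hij
  · have hlxy : x.length = y.length := by rw [hlen x hx, hlen y hy]
    have : x = y := by rw [← hxi.2, ← hyj.2, hlxy]
    tauto
  · exact shifted hy hx (by omega) hyj hxi hji

theorem Realizes.length_eq {w : List (Option α)} {x : List α} (h : Realizes w x) :
    x.length = w.length :=
  (List.Forall₂.length_eq h).symm

theorem Realizes.getElem?_eq_some {w : List (Option α)} {x : List α} (h : Realizes w x)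
    {t : ℕ} {b : α} (hw : w[t]? = some (some b)) : x[t]? = some b := by
  induction h generalizing t with
  | nil => simp at hw
  | cons hab _ ih =>
    cases t with
    | zero => simp_all
    | succ t => exact ih hw

end Overlap

section BlockWord

def wildBlock (m : ℕ) : List (Option Bool) :=
  some true :: List.replicate m none

/-- The partial word `0^(m+1) (1 ?^m)^n 1`. -/
def blockWord (m n : ℕ) : List (Option Bool) :=
  List.replicate (m + 1) (some false) ++ (List.replicate n (wildBlock m)).flatten ++ [some true]

variable {m n : ℕ}

theorem length_blockWord : (blockWord m n).length = (n + 1) * (m + 1) + 1 := by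
  simp [blockWord, wildBlock]
  ring

theorem getElem?_blockWord_of_le {t : ℕ} (ht : t ≤ m) :
    (blockWord m n)[t]? = some (some false) := by
  rw [blockWord, List.append_assoc, List.getElem?_append_left (by simp; omega)]
  simp [Nat.lt_succ_of_le ht]

theorem getElem?_flatten_replicate_wildBlock_append {q : ℕ} (hq : q ≤ n) :
    ((List.replicate n (wildBlock m)).flatten ++ [some true])[q * (m + 1)]? = some (some true) := by
  induction n generalizing q with
  | zero => simp_all
  | succ n ih =>
    rw [List.replicate_succ, List.flatten_cons, List.append_assoc]
    cases q with
    | zero => simp [wildBlock]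
    | succ q =>
      rw [List.getElem?_append_right (by simp [wildBlock])]
      simpa [wildBlock, Nat.succ_mul] using ih (by omega)

theorem getElem?_blockWord_mul {p : ℕ} (hp : 1 ≤ p) (hpn : p ≤ n + 1) :
    (blockWord m n)[p * (m + 1)]? = some (some true) := by
  obtain ⟨q, rfl⟩ := Nat.exists_eq_add_of_le' hp
  rw [blockWord, List.append_assoc, List.getElem?_append_right (by simp)]
  simpa [Nat.succ_mul] using getElem?_flatten_replicate_wildBlock_append (m := m) (by omega)

theorem exists_getElem?_ne_of_realizes {x y : List Bool} (hx : Realizes (blockWord m n) x)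
    (hy : Realizes (blockWord m n) y) {d : ℕ} (hd : 0 < d) (hdL : d < (n + 1) * (m + 1) + 1) :
    ∃ k, k + d < (n + 1) * (m + 1) + 1 ∧ x[k + d]? ≠ y[k]? := by
  set p := (d + m) / (m + 1)
  have hp : 1 ≤ p := (Nat.le_div_iff_mul_le (by omega)).2 (by omega)
  have hpn : p ≤ n + 1 := Nat.lt_succ_iff.1 ((Nat.div_lt_iff_lt_mul (by omega)).2 (by nlinarith))
  have hlo : p * (m + 1) ≤ d + m := Nat.div_mul_le_self _ _
  have hhi : d + m < p * (m + 1) + (m + 1) := Nat.lt_div_mul_add (by omega)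
  have hpL : p * (m + 1) ≤ (n + 1) * (m + 1) := Nat.mul_le_mul_right _ hpn
  refine ⟨p * (m + 1) - d, by omega, ?_⟩
  rw [Nat.sub_add_cancel (by omega), hx.getElem?_eq_some (getElem?_blockWord_mul hp hpn),
    hy.getElem?_eq_some (getElem?_blockWord_of_le (by omega))]
  simp

end BlockWord

theorem stmt10_general (m n : ℕ) :
    PartialNonoverlapping
      (List.replicate (m + 1) (some false)
        ++ (List.replicate n
              ((some true) :: List.replicate m (none : Option Bool))).flatten
        ++ [some true]) :=
  setNonoverlapping_of_forall_exists_ne (fun _ hx => hx.length_eq.trans length_blockWord)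
    fun _ hx _ hy _ hd hdL => exists_getElem?_ne_of_realizes hx hy hd hdL

/-- For every `m ≥ 1` and `n ≥ 0`, the binary partial word `0^(m+1) (1 ?^m)^n 1`
is nonoverlapping. -/
theorem stmt10 (m n : ℕ) (hm : 1 ≤ m) :
    PartialNonoverlapping
      (List.replicate (m + 1) (some false)
        ++ (List.replicate n
              ((some true) :: List.replicate m (none : Option Bool))).flatten
        ++ [some true]) :=
  stmt10_general m n
end
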